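/- Write a = λ₁² + λ₂² − λ₃² − λ₄² and b = λ₁λ₃ + λ₂λ₄, and K_{ijkl} = K(Eᵢ,Eⱼ,E_k,E_l). Then: K₁₂₁₂ = −K₁₂₃₄ = −K₃₄₁₂ = K₃₄₃₄ = a + 4μ₁²; K₁₄₁₄ = −K₁₄₂₃ = −K₂₃₁₄ = K₂₃₂₃ = −a + 4μ₂²; K₁₂₁₄ = −K₁₂₂₃ = −K₂₃₁₂ = K₂₃₃₄ = K₁₄₁₂ = −K₁₄₃₄ = −K₃₄₁₄ = K₃₄₂₃ = 2b + 4μ₁μ₂. -/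

import Mathlib

noncomputable section

/-- The underlying 5-dimensional real vector space. -/
abbrev V : Type := Fin 5 → ℝ

/-- The basis `E₁,…,E₅` (0-indexed: `E 0 = E₁`, …, `E 4 = E₅`). -/
def E (i : Fin 5) : V := Pi.single i 1

/-- `ξ = E₅`. -/
def xiV : V := E 4

/-- The almost contact endomorphism `φ`. -/
def phiV (x : V) : V := ![-x 2, -x 3, x 0, x 1, 0]

/-- The contact form `η`. -/
def etaF (x : V) : ℝ := x 4

/-- The B-metric `g`. -/
def gB (x y : V) : ℝ := x 0 * y 0 + x 1 * y 1 - x 2 * y 2 - x 3 * y 3 + x 4 * y 4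

/-- The signs `εᵢ = g(Eᵢ,Eᵢ)`. -/
def eps : Fin 5 → ℝ := ![1, 1, -1, -1, 1]

/-- The Lie bracket: the unique skew-symmetric bilinear bracket whose only nonzero
basis brackets are `[E₁,E₂] = -[E₃,E₄] = -λ₁E₁ - λ₂E₂ + λ₃E₃ + λ₄E₄ + 2μ₁E₅` and
`[E₁,E₄] = -[E₂,E₃] = -λ₃E₁ - λ₄E₂ - λ₁E₃ - λ₂E₄ + 2μ₂E₅`. -/
def brkt (l1 l2 l3 l4 m1 m2 : ℝ) (x y : V) : V :=
  (x 0 * y 1 - x 1 * y 0 - x 2 * y 3 + x 3 * y 2) •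
    (![-l1, -l2, l3, l4, 2 * m1] : V) +
  (x 0 * y 3 - x 3 * y 0 - x 1 * y 2 + x 2 * y 1) •
    (![-l3, -l4, -l1, -l2, 2 * m2] : V)

/-- The torsion `T(x,y) = 2(η(x)∇_yξ − η(y)∇_xξ + g(∇_xξ,y)ξ)`. -/
def Tors (nabla : V → V → V) (x y : V) : V :=
  (2 : ℝ) • (etaF x • nabla y xiV - etaF y • nabla x xiV + gB (nabla x xiV) y • xiV)

/-- The φKT-connection `D_x y = ∇_x y + (1/2)T(x,y)`. -/
def Dconn (nabla : V → V → V) (x y : V) : V :=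
  nabla x y + (1 / 2 : ℝ) • Tors nabla x y

/-- Curvature of a connection: `∇_x∇_y z − ∇_y∇_x z − ∇_{[x,y]}z`. -/
def curv (br conn : V → V → V) (x y z : V) : V :=
  conn x (conn y z) - conn y (conn x z) - conn (br x y) z

/-- Curvature (0,4)-tensor. -/
def curv4 (br conn : V → V → V) (x y z w : V) : ℝ := gB (curv br conn x y z) w

/-- Ricci tensor. -/
def ricci (br conn : V → V → V) (y z : V) : ℝ :=
  ∑ i : Fin 5, eps i * curv4 br conn (E i) y z (E i)

/-- Scalar curvature. -/
def scal (br conn : V → V → V) : ℝ :=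
  ∑ i : Fin 5, ∑ j : Fin 5, eps i * eps j * curv4 br conn (E i) (E j) (E j) (E i)

/-- `(∇_xφ)y = ∇_x(φy) − φ(∇_x y)`. -/
def nphi (nabla : V → V → V) (x y : V) : V := nabla x (phiV y) - phiV (nabla x y)

/-- The square norm `‖∇φ‖²`. -/
def sqnormNphi (nabla : V → V → V) : ℝ :=
  ∑ i : Fin 5, ∑ k : Fin 5,
    eps i * eps k * gB (nphi nabla (E i) (E k)) (nphi nabla (E i) (E k))

/-!
The Koszul formula determines `∇`; in particular `∇ξ = -(μ₁J₁ + μ₂J₂)`, where `J₁`, `J₂` are two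
commuting complex structures on `span{E₁,…,E₄}` killing `ξ`. Substituting into `D` gives
`D_x = -(g(x,u) J₁ + g(x,v) J₂)` with `u = [E₁,E₂]` and `v = [E₁,E₄]`. So all the `D_x` commute,
the curvature collapses to `K(x,y) = -D_{[x,y]}`, and
`K(x,y,z,w) = g([x,y],u) g(J₁z,w) + g([x,y],v) g(J₂z,w)`.
As `[E₃,E₄] = -u` and `[E₂,E₃] = -v`, every listed component is, up to sign, one of the Gram
entries `g(u,u) = a + 4μ₁²`, `g(v,v) = -a + 4μ₂²`, `g(u,v) = 2b + 4μ₁μ₂`.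
-/

namespace PhiKT

def J₁ : Module.End ℝ V where
  toFun y := ![-y 1, y 0, -y 3, y 2, 0]
  map_add' x y := by ext i; fin_cases i <;> simp [add_comm]
  map_smul' c x := by ext i; fin_cases i <;> simp

def J₂ : Module.End ℝ V where
  toFun y := ![-y 3, y 2, y 1, -y 0, 0]
  map_add' x y := by ext i; fin_cases i <;> simp [add_comm]
  map_smul' c x := by ext i; fin_cases i <;> simp

theorem J₁_apply (y : V) : J₁ y = ![-y 1, y 0, -y 3, y 2, 0] := rfl

theorem J₂_apply (y : V) : J₂ y = ![-y 3, y 2, y 1, -y 0, 0] := rfl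

theorem commute_J₁_J₂ : Commute J₁ J₂ := by
  ext y i
  fin_cases i <;> simp [J₁_apply, J₂_apply]

theorem xiV_eq : xiV = ![0, 0, 0, 0, 1] := by
  ext i; fin_cases i <;> rfl

theorem gB_E (x : V) (i : Fin 5) : gB x (E i) = eps i * x i := by
  fin_cases i <;> simp [gB, E, eps]

theorem gB_neg_left (x y : V) : gB (-x) y = -gB x y := by
  simp only [gB, Pi.neg_apply]; ring

theorem eps_mul_self (i : Fin 5) : eps i * eps i = 1 := by
  fin_cases i <;> simp [eps]

def IsLeviCivita (br nabla : V → V → V) : Prop :=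
  ∀ x y z : V, 2 * gB (nabla x y) z = gB (br x y) z + gB (br z x) y + gB (br z y) x

theorem IsLeviCivita.apply_eq {br nabla : V → V → V} (hkos : IsLeviCivita br nabla)
    (x y : V) (i : Fin 5) :
    nabla x y i = eps i * (gB (br x y) (E i) + gB (br (E i) x) y + gB (br (E i) y) x) / 2 := by
  have h := hkos x y (E i)
  rw [gB_E] at h
  linear_combination (eps i / 2) * h - nabla x y i * eps_mul_self i

theorem curv_eq_neg_of_comm {br conn : V → V → V}
    (h : ∀ x y z, conn x (conn y z) = conn y (conn x z)) (x y z : V) :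
    curv br conn x y z = -conn (br x y) z := by
  simp [curv, h]

section Bracket

variable (l1 l2 l3 l4 m1 m2 : ℝ)

theorem brkt_E0_E1 :
    brkt l1 l2 l3 l4 m1 m2 (E 0) (E 1) = ![-l1, -l2, l3, l4, 2 * m1] := by
  ext i; fin_cases i <;> simp [brkt, E]

theorem brkt_E0_E3 :
    brkt l1 l2 l3 l4 m1 m2 (E 0) (E 3) = ![-l3, -l4, -l1, -l2, 2 * m2] := by
  ext i; fin_cases i <;> simp [brkt, E]

theorem brkt_E2_E3 :
    brkt l1 l2 l3 l4 m1 m2 (E 2) (E 3) = -brkt l1 l2 l3 l4 m1 m2 (E 0) (E 1) := by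
  ext i; fin_cases i <;> simp [brkt, E]

theorem brkt_E1_E2 :
    brkt l1 l2 l3 l4 m1 m2 (E 1) (E 2) = -brkt l1 l2 l3 l4 m1 m2 (E 0) (E 3) := by
  ext i; fin_cases i <;> simp [brkt, E]

theorem gB_brkt_E0_E1_self :
    gB (brkt l1 l2 l3 l4 m1 m2 (E 0) (E 1)) (brkt l1 l2 l3 l4 m1 m2 (E 0) (E 1)) =
      l1 ^ 2 + l2 ^ 2 - l3 ^ 2 - l4 ^ 2 + 4 * m1 ^ 2 := by
  simp only [brkt_E0_E1, gB, Matrix.cons_val]; ring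

theorem gB_brkt_E0_E3_self :
    gB (brkt l1 l2 l3 l4 m1 m2 (E 0) (E 3)) (brkt l1 l2 l3 l4 m1 m2 (E 0) (E 3)) =
      -(l1 ^ 2 + l2 ^ 2 - l3 ^ 2 - l4 ^ 2) + 4 * m2 ^ 2 := by
  simp only [brkt_E0_E3, gB, Matrix.cons_val]; ring

theorem gB_brkt_E0_E1_brkt_E0_E3 :
    gB (brkt l1 l2 l3 l4 m1 m2 (E 0) (E 1)) (brkt l1 l2 l3 l4 m1 m2 (E 0) (E 3)) =
      2 * (l1 * l3 + l2 * l4) + 4 * m1 * m2 := by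
  simp only [brkt_E0_E1, brkt_E0_E3, gB, Matrix.cons_val]; ring

theorem gB_brkt_E0_E3_brkt_E0_E1 :
    gB (brkt l1 l2 l3 l4 m1 m2 (E 0) (E 3)) (brkt l1 l2 l3 l4 m1 m2 (E 0) (E 1)) =
      2 * (l1 * l3 + l2 * l4) + 4 * m1 * m2 := by
  simp only [brkt_E0_E1, brkt_E0_E3, gB, Matrix.cons_val]; ring

end Bracket

section LeviCivita

variable {l1 l2 l3 l4 m1 m2 : ℝ} {nabla : V → V → V}

theorem nabla_xiV (hkos : IsLeviCivita (brkt l1 l2 l3 l4 m1 m2) nabla) (x : V) :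
    nabla x xiV = -(m1 • J₁ x + m2 • J₂ x) := by
  ext i
  fin_cases i <;> simp [hkos.apply_eq, gB, brkt, E, xiV_eq, eps, J₁_apply, J₂_apply] <;> ring

theorem Dconn_eq (hkos : IsLeviCivita (brkt l1 l2 l3 l4 m1 m2) nabla) (x y : V) :
    Dconn nabla x y = -(gB x (brkt l1 l2 l3 l4 m1 m2 (E 0) (E 1)) • J₁ y +
      gB x (brkt l1 l2 l3 l4 m1 m2 (E 0) (E 3)) • J₂ y) := by
  simp only [Dconn, Tors, nabla_xiV hkos]
  ext i
  fin_cases i <;>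
    simp [hkos.apply_eq, gB, brkt, E, xiV_eq, etaF, eps, J₁_apply, J₂_apply] <;> ring

theorem Dconn_comm (hkos : IsLeviCivita (brkt l1 l2 l3 l4 m1 m2) nabla) (x y z : V) :
    Dconn nabla x (Dconn nabla y z) = Dconn nabla y (Dconn nabla x z) := by
  have hJ (w : V) : J₁ (J₂ w) = J₂ (J₁ w) := LinearMap.congr_fun commute_J₁_J₂.eq w
  simp only [Dconn_eq hkos, map_neg, map_add, map_smul, hJ]
  module

theorem curv4_Dconn (hkos : IsLeviCivita (brkt l1 l2 l3 l4 m1 m2) nabla) (x y z w : V) :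
    curv4 (brkt l1 l2 l3 l4 m1 m2) (Dconn nabla) x y z w =
      gB (brkt l1 l2 l3 l4 m1 m2 x y) (brkt l1 l2 l3 l4 m1 m2 (E 0) (E 1)) * gB (J₁ z) w +
        gB (brkt l1 l2 l3 l4 m1 m2 x y) (brkt l1 l2 l3 l4 m1 m2 (E 0) (E 3)) * gB (J₂ z) w := by
  rw [curv4, curv_eq_neg_of_comm (Dconn_comm hkos), Dconn_eq hkos]
  simp only [gB, Pi.neg_apply, Pi.add_apply, Pi.smul_apply, smul_eq_mul]
  ring

end LeviCivita

end PhiKT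

open PhiKT

theorem statement_13 (l1 l2 l3 l4 m1 m2 : ℝ)
    (nabla : V → V → V)
    (hkos : ∀ x y z : V, 2 * gB (nabla x y) z =
      gB (brkt l1 l2 l3 l4 m1 m2 x y) z + gB (brkt l1 l2 l3 l4 m1 m2 z x) y +
        gB (brkt l1 l2 l3 l4 m1 m2 z y) x) :
    ∀ a b : ℝ, a = l1 ^ 2 + l2 ^ 2 - l3 ^ 2 - l4 ^ 2 → b = l1 * l3 + l2 * l4 →
(      curv4 (brkt l1 l2 l3 l4 m1 m2) (Dconn nabla) (E 0) (E 1) (E 0) (E 1) = a + 4 * m1 ^ 2 ∧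
      -(curv4 (brkt l1 l2 l3 l4 m1 m2) (Dconn nabla) (E 0) (E 1) (E 2) (E 3)) = a + 4 * m1 ^ 2 ∧
      -(curv4 (brkt l1 l2 l3 l4 m1 m2) (Dconn nabla) (E 2) (E 3) (E 0) (E 1)) = a + 4 * m1 ^ 2 ∧
      curv4 (brkt l1 l2 l3 l4 m1 m2) (Dconn nabla) (E 2) (E 3) (E 2) (E 3) = a + 4 * m1 ^ 2 ∧
      curv4 (brkt l1 l2 l3 l4 m1 m2) (Dconn nabla) (E 0) (E 3) (E 0) (E 3) = -a + 4 * m2 ^ 2 ∧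
      -(curv4 (brkt l1 l2 l3 l4 m1 m2) (Dconn nabla) (E 0) (E 3) (E 1) (E 2)) = -a + 4 * m2 ^ 2 ∧
      -(curv4 (brkt l1 l2 l3 l4 m1 m2) (Dconn nabla) (E 1) (E 2) (E 0) (E 3)) = -a + 4 * m2 ^ 2 ∧
      curv4 (brkt l1 l2 l3 l4 m1 m2) (Dconn nabla) (E 1) (E 2) (E 1) (E 2) = -a + 4 * m2 ^ 2 ∧
      curv4 (brkt l1 l2 l3 l4 m1 m2) (Dconn nabla) (E 0) (E 1) (E 0) (E 3) = 2 * b + 4 * m1 * m2 ∧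
      -(curv4 (brkt l1 l2 l3 l4 m1 m2) (Dconn nabla) (E 0) (E 1) (E 1) (E 2)) = 2 * b + 4 * m1 * m2 ∧
      -(curv4 (brkt l1 l2 l3 l4 m1 m2) (Dconn nabla) (E 1) (E 2) (E 0) (E 1)) = 2 * b + 4 * m1 * m2 ∧
      curv4 (brkt l1 l2 l3 l4 m1 m2) (Dconn nabla) (E 1) (E 2) (E 2) (E 3) = 2 * b + 4 * m1 * m2 ∧
      curv4 (brkt l1 l2 l3 l4 m1 m2) (Dconn nabla) (E 0) (E 3) (E 0) (E 1) = 2 * b + 4 * m1 * m2 ∧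
      -(curv4 (brkt l1 l2 l3 l4 m1 m2) (Dconn nabla) (E 0) (E 3) (E 2) (E 3)) = 2 * b + 4 * m1 * m2 ∧
      -(curv4 (brkt l1 l2 l3 l4 m1 m2) (Dconn nabla) (E 2) (E 3) (E 0) (E 3)) = 2 * b + 4 * m1 * m2 ∧
      curv4 (brkt l1 l2 l3 l4 m1 m2) (Dconn nabla) (E 2) (E 3) (E 1) (E 2) = 2 * b + 4 * m1 * m2) := by
  rintro a b rfl rfl
  simp only [curv4_Dconn hkos, brkt_E2_E3, brkt_E1_E2, gB_neg_left, gB_brkt_E0_E1_self,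
    gB_brkt_E0_E3_self, gB_brkt_E0_E1_brkt_E0_E3, gB_brkt_E0_E3_brkt_E0_E1]
  refine ⟨?_, ?_, ?_, ?_, ?_, ?_, ?_, ?_, ?_, ?_, ?_, ?_, ?_, ?_, ?_, ?_⟩ <;>
    simp [gB, E, J₁_apply, J₂_apply]
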